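/- Let α, β, γ > 0, μ, r, b ∈ ℝ, p ∈ (0,1), y₁ < y₂ and x₀ ∈ ℝ, and set x̂(y) = −(αy + γμ)/β, θ̄(y) = (αy + γμ)/(α + γ), V = 1/β + 1/(α + γ). Define the biased sender's interim payoff Π_b(x, y) = ∫_ℝ (r + b + θ)(1 − Φ(x; θ, 1/β)) φ(θ; θ̄(y), 1/(α + γ)) dθ. Then the information-withholding welfare gain admits the decomposition p·∫_ℝ ∫_{y₁}^{y₂} (r + θ)(Φ(x̂(y); θ, 1/β) − Φ(x₀; θ, 1/β)) φ(y; θ, 1/α) φ(θ; μ, 1/γ) dy dθ = p·∫_{y₁}^{y₂} [ Π_b(x₀, y) − Π_b(x̂(y), y) − b·(Φ(x̂(y); θ̄(y), V) − Φ(x₀; θ̄(y), V)) ] · φ(y; μ, 1/α + 1/γ) dy. (The gain from withholding equals the sender's expected concealment gain minus b times the aggregate-action gain.) -/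

import Mathlib

open MeasureTheory Real Set

/-- Gaussian density of `N(m, v)` evaluated at `t`. -/
noncomputable def phi (t m v : ℝ) : ℝ :=
  (2 * Real.pi * v) ^ (-(1:ℝ)/2) * Real.exp (-(t - m)^2 / (2*v))

/-- Gaussian cumulative distribution function of `N(m, v)` evaluated at `t`. -/
noncomputable def Phi (t m v : ℝ) : ℝ := ∫ s in Set.Iic t, phi s m v

lemma phi_eq (t m v : ℝ) : phi t m v
    = (2*π*v) ^ (-(1:ℝ)/2) * Real.exp (-(1/(2*v)) * (t-m)^2) := by
  unfold phi; congr 1; ring_nf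

lemma phi_nonneg {v : ℝ} (hv : 0 ≤ v) (t m : ℝ) : 0 ≤ phi t m v :=
  mul_nonneg (Real.rpow_nonneg (by positivity) _) (Real.exp_nonneg _)

lemma phi_le {v : ℝ} (hv : 0 < v) (t m : ℝ) : phi t m v ≤ (2*π*v) ^ (-(1:ℝ)/2) := by
  have h1 : Real.exp (-(t - m)^2 / (2*v)) ≤ 1 := by
    apply Real.exp_le_one_iff.mpr
    have : (0:ℝ) ≤ (t-m)^2 / (2*v) := by positivity
    have he : -(t - m)^2 / (2*v) = -((t-m)^2/(2*v)) := by ring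
    rw [he]; linarith
  calc phi t m v ≤ (2*π*v) ^ (-(1:ℝ)/2) * 1 :=
        mul_le_mul_of_nonneg_left h1 (Real.rpow_nonneg (by positivity) _)
    _ = _ := mul_one _

lemma continuous_phi (m v : ℝ) : Continuous fun t => phi t m v := by
  unfold phi; fun_prop

lemma continuous_phi2 (v : ℝ) : Continuous fun p : ℝ × ℝ => phi p.1 p.2 v := by
  unfold phi; fun_prop

lemma phi_sub (t m v : ℝ) : phi t m v = phi (t - m) 0 v := by simp [phi]

lemma integrable_phi {v : ℝ} (hv : 0 < v) (m : ℝ) : Integrable fun t => phi t m v := by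
  simp_rw [phi_eq]
  exact ((integrable_exp_neg_mul_sq (by positivity : (0:ℝ) < 1/(2*v))).comp_sub_right
    m).const_mul _

lemma integral_phi {v : ℝ} (hv : 0 < v) (m : ℝ) : ∫ t, phi t m v = 1 := by
  simp_rw [phi_eq]
  rw [MeasureTheory.integral_const_mul,
    show (∫ t, Real.exp (-(1/(2*v)) * (t-m)^2)) = ∫ t, Real.exp (-(1/(2*v)) * t^2) from
      integral_sub_right_eq_self (μ := volume) (fun u => Real.exp (-(1/(2*v)) * u^2)) m,
    integral_gaussian, show π / (1/(2*v)) = 2*π*v by field_simp,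
    show (-(1:ℝ)/2) = -(1/2) by norm_num, Real.rpow_neg (by positivity),
    Real.sqrt_eq_rpow, ← Real.rpow_neg (by positivity)]
  rw [← Real.rpow_add (by positivity)]
  norm_num
lemma integrable_abs_mul_phi {v : ℝ} (hv : 0 < v) (m : ℝ) :
    Integrable fun t => |t| * phi t m v := by
  have hb : (0:ℝ) < 1/(2*v) := by positivity
  have h1 : Integrable (fun u : ℝ => |u * Real.exp (-(1/(2*v)) * u^2)|) :=
    (integrable_mul_exp_neg_mul_sq hb).abs
  have h2 : Integrable (fun u : ℝ => |u| * phi u 0 v) := by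
    simp_rw [phi_eq, sub_zero]
    refine (h1.const_mul ((2*π*v) ^ (-(1:ℝ)/2))).congr (Filter.Eventually.of_forall fun u => ?_)
    simp only [abs_mul, abs_of_nonneg (Real.exp_nonneg _)]; ring
  have h3 : Integrable (fun t : ℝ => |t - m| * phi t m v) := by
    simp_rw [phi_sub _ m v]
    exact h2.comp_sub_right m
  refine Integrable.mono' (h3.add ((integrable_phi hv m).const_mul |m|))
    ((continuous_abs.mul (continuous_phi m v)).aestronglyMeasurable)
    (Filter.Eventually.of_forall fun t => ?_)
  have habs : |t| ≤ |t - m| + |m| := by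
    calc |t| = |(t - m) + m| := by ring_nf
    _ ≤ |t - m| + |m| := abs_add_le _ _
  rw [Real.norm_eq_abs, abs_of_nonneg (mul_nonneg (abs_nonneg _) (phi_nonneg hv.le _ _))]
  have := mul_le_mul_of_nonneg_right habs (phi_nonneg hv.le t m)
  simp only [Pi.add_apply]
  linarith [this]

lemma integrable_linear_phi {v : ℝ} (hv : 0 < v) (c m : ℝ) :
    Integrable fun t => (c + |t|) * phi t m v := by
  simp_rw [add_mul]
  exact ((integrable_phi hv m).const_mul c).add (integrable_abs_mul_phi hv m)

lemma phi_mul_phi {v w : ℝ} (hv : 0 < v) (hw : 0 < w) (y θ m : ℝ) :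
    phi y θ v * phi θ m w
      = phi θ ((w*y + v*m)/(v+w)) (v*w/(v+w)) * phi y m (v+w) := by
  have hvw : (0:ℝ) < v + w := by positivity
  unfold phi
  rw [show ((2 * π * v) ^ (-(1:ℝ)/2) * Real.exp (-(y - θ)^2 / (2*v))) *
        ((2 * π * w) ^ (-(1:ℝ)/2) * Real.exp (-(θ - m)^2 / (2*w)))
      = ((2 * π * v) ^ (-(1:ℝ)/2) * (2 * π * w) ^ (-(1:ℝ)/2)) *
        (Real.exp (-(y - θ)^2 / (2*v)) * Real.exp (-(θ - m)^2 / (2*w))) by ring,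
    show ((2 * π * (v*w/(v+w))) ^ (-(1:ℝ)/2) * Real.exp (-(θ - (w*y + v*m)/(v+w))^2 / (2*(v*w/(v+w))))) *
        ((2 * π * (v+w)) ^ (-(1:ℝ)/2) * Real.exp (-(y - m)^2 / (2*(v+w))))
      = ((2 * π * (v*w/(v+w))) ^ (-(1:ℝ)/2) * (2 * π * (v+w)) ^ (-(1:ℝ)/2)) *
        (Real.exp (-(θ - (w*y + v*m)/(v+w))^2 / (2*(v*w/(v+w)))) * Real.exp (-(y - m)^2 / (2*(v+w)))) by ring,
    ← Real.mul_rpow (by positivity) (by positivity),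
    ← Real.mul_rpow (by positivity) (by positivity),
    ← Real.exp_add, ← Real.exp_add]
  congr 2
  · field_simp
  · field_simp
    ring

lemma integral_phi_mul_phi {v w : ℝ} (hv : 0 < v) (hw : 0 < w) (y m : ℝ) :
    ∫ θ, phi y θ v * phi θ m w = phi y m (v+w) := by
  simp_rw [phi_mul_phi hv hw y _ m]
  rw [MeasureTheory.integral_mul_const, integral_phi (by positivity), one_mul]
lemma Phi_shift (x θ v : ℝ) : Phi x θ v = Phi (x - θ) 0 v := by
  unfold Phi
  rw [← integral_indicator measurableSet_Iic, ← integral_indicator measurableSet_Iic]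
  conv_rhs => rw [← integral_sub_right_eq_self (μ := volume)
    (fun s => (Set.Iic (x - θ)).indicator (fun u => phi u 0 v) s) θ]
  congr 1
  funext s
  rw [Set.indicator_apply, Set.indicator_apply]
  have hmem : s ∈ Set.Iic x ↔ s - θ ∈ Set.Iic (x - θ) := by
    simp [sub_le_sub_iff_right]
  by_cases h : s ∈ Set.Iic x
  · rw [if_pos h, if_pos (hmem.mp h)]
    simp [phi]
  · rw [if_neg h, if_neg (fun hh => h (hmem.mpr hh))]

lemma Phi_mono {v : ℝ} (hv : 0 < v) (m : ℝ) : Monotone fun x => Phi x m v := by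
  intro a c h
  exact setIntegral_mono_set (integrable_phi hv m).integrableOn
    (Filter.Eventually.of_forall fun t => phi_nonneg hv.le t m)
    (HasSubset.Subset.eventuallyLE (Set.Iic_subset_Iic.mpr h))

lemma measurable_Phi {v : ℝ} (hv : 0 < v) (x : ℝ) : Measurable fun θ => Phi x θ v := by
  simp_rw [Phi_shift x _ v]
  exact ((Phi_mono hv 0).measurable).comp (measurable_const.sub measurable_id)

lemma Phi_nonneg {v : ℝ} (hv : 0 ≤ v) (x m : ℝ) : 0 ≤ Phi x m v :=
  setIntegral_nonneg measurableSet_Iic fun t _ => phi_nonneg hv t m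

lemma Phi_le_one {v : ℝ} (hv : 0 < v) (x m : ℝ) : Phi x m v ≤ 1 := by
  rw [← integral_phi hv m]
  exact setIntegral_le_integral (integrable_phi hv m)
    (Filter.Eventually.of_forall fun t => phi_nonneg hv.le t m)

lemma integrable_Phi_mul_phi {v w : ℝ} (hv : 0 < v) (hw : 0 < w) (x m : ℝ) :
    Integrable fun θ => Phi x θ v * phi θ m w := by
  refine Integrable.mono' (integrable_phi hw m)
    (((measurable_Phi hv x).mul (continuous_phi m w).measurable).aestronglyMeasurable)
    (Filter.Eventually.of_forall fun θ => ?_)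
  rw [Real.norm_eq_abs, abs_mul, abs_of_nonneg (Phi_nonneg hv.le _ _),
    abs_of_nonneg (phi_nonneg hw.le _ _)]
  calc Phi x θ v * phi θ m w ≤ 1 * phi θ m w :=
        mul_le_mul_of_nonneg_right (Phi_le_one hv _ _) (phi_nonneg hw.le _ _)
    _ = phi θ m w := one_mul _

lemma Phi_conv {v w : ℝ} (hv : 0 < v) (hw : 0 < w) (x m : ℝ) :
    ∫ θ, Phi x θ v * phi θ m w = Phi x m (v+w) := by
  have key : ∀ θ, Phi x θ v * phi θ m w = ∫ s in Set.Iic x, phi s θ v * phi θ m w := by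
    intro θ
    rw [Phi]
    exact (MeasureTheory.integral_mul_const _ _).symm
  simp_rw [key]
  have hcont : Continuous fun p : ℝ × ℝ => phi p.2 p.1 v * phi p.1 m w := by
    unfold phi; fun_prop
  have hint : Integrable (fun p : ℝ × ℝ => phi p.2 p.1 v * phi p.1 m w)
      (volume.prod (volume.restrict (Set.Iic x))) := by
    rw [MeasureTheory.integrable_prod_iff hcont.aestronglyMeasurable]
    constructor
    · exact Filter.Eventually.of_forall fun θ =>
        (((integrable_phi hv θ).mul_const (phi θ m w)).restrict)
    · have heq : (fun θ => ∫ s, ‖phi s θ v * phi θ m w‖ ∂(volume.restrict (Set.Iic x)))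
          = fun θ => Phi x θ v * phi θ m w := by
        funext θ
        rw [key]
        congr 1
        funext s
        rw [Real.norm_eq_abs, abs_of_nonneg
          (mul_nonneg (phi_nonneg hv.le _ _) (phi_nonneg hw.le _ _))]
      rw [heq]
      exact integrable_Phi_mul_phi hv hw x m
  rw [MeasureTheory.integral_integral_swap (f := fun θ s => phi s θ v * phi θ m w) (by exact hint)]
  have : ∀ s, (∫ θ, phi s θ v * phi θ m w) = phi s m (v+w) := fun s =>
    integral_phi_mul_phi hv hw s m
  simp_rw [this]
  rfl
lemma integrable_helper {w : ℝ} (hw : 0 < w) {g : ℝ → ℝ} (hg : Measurable g)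
    (hgb : ∀ θ, |g θ| ≤ 1) (c m : ℝ) :
    Integrable fun θ => (c + θ) * g θ * phi θ m w := by
  refine Integrable.mono' (integrable_linear_phi hw |c| m)
    ((((measurable_const.add measurable_id).mul hg).mul
      (continuous_phi m w).measurable).aestronglyMeasurable)
    (Filter.Eventually.of_forall fun θ => ?_)
  rw [Real.norm_eq_abs, abs_mul, abs_mul, abs_of_nonneg (phi_nonneg hw.le _ _)]
  have h2 : |c + θ| * |g θ| ≤ (|c| + |θ|) * 1 :=
    mul_le_mul (abs_add_le _ _) (hgb θ) (abs_nonneg _) (by positivity)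
  calc |c + θ| * |g θ| * phi θ m w ≤ ((|c| + |θ|) * 1) * phi θ m w :=
        mul_le_mul_of_nonneg_right h2 (phi_nonneg hw.le θ m)
    _ = (|c| + |θ|) * phi θ m w := by ring

lemma key_identity {v w : ℝ} (hv : 0 < v) (hw : 0 < w) (x0 x1 m R b : ℝ) :
    (∫ θ, (R + b + θ) * (1 - Phi x0 θ v) * phi θ m w)
      - (∫ θ, (R + b + θ) * (1 - Phi x1 θ v) * phi θ m w)
      - b * (Phi x1 m (v+w) - Phi x0 m (v+w))
    = ∫ θ, (R + θ) * (Phi x1 θ v - Phi x0 θ v) * phi θ m w := by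
  have bnd : ∀ x θ, |1 - Phi x θ v| ≤ 1 := fun x θ => abs_le.mpr
    ⟨by linarith [Phi_le_one hv x θ], by linarith [Phi_nonneg hv.le x θ]⟩
  have bndΔ : ∀ θ, |Phi x1 θ v - Phi x0 θ v| ≤ 1 := fun θ => abs_le.mpr
    ⟨by linarith [Phi_nonneg hv.le x1 θ, Phi_le_one hv x0 θ],
     by linarith [Phi_le_one hv x1 θ, Phi_nonneg hv.le x0 θ]⟩
  have h0 : Integrable fun θ => (R + b + θ) * (1 - Phi x0 θ v) * phi θ m w :=
    integrable_helper hw (measurable_const.sub (measurable_Phi hv x0)) (bnd x0) (R+b) m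
  have h1 : Integrable fun θ => (R + b + θ) * (1 - Phi x1 θ v) * phi θ m w :=
    integrable_helper hw (measurable_const.sub (measurable_Phi hv x1)) (bnd x1) (R+b) m
  have hA : Integrable fun θ => (R + θ) * (Phi x1 θ v - Phi x0 θ v) * phi θ m w :=
    integrable_helper hw ((measurable_Phi hv x1).sub (measurable_Phi hv x0)) bndΔ R m
  have iP0 := integrable_Phi_mul_phi hv hw x0 m
  have iP1 := integrable_Phi_mul_phi hv hw x1 m
  have hB : Integrable fun θ => b * (Phi x1 θ v * phi θ m w - Phi x0 θ v * phi θ m w) :=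
    (iP1.sub iP0).const_mul b
  have hsub : (∫ θ, (R + b + θ) * (1 - Phi x0 θ v) * phi θ m w)
      - (∫ θ, (R + b + θ) * (1 - Phi x1 θ v) * phi θ m w)
      = ∫ θ, (R + b + θ) * (Phi x1 θ v - Phi x0 θ v) * phi θ m w := by
    rw [← integral_sub h0 h1]
    congr 1; funext θ; ring
  have hsplit : (∫ θ, (R + b + θ) * (Phi x1 θ v - Phi x0 θ v) * phi θ m w)
      = (∫ θ, (R + θ) * (Phi x1 θ v - Phi x0 θ v) * phi θ m w)
        + b * ((∫ θ, Phi x1 θ v * phi θ m w) - ∫ θ, Phi x0 θ v * phi θ m w) := by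
    rw [show (fun θ => (R + b + θ) * (Phi x1 θ v - Phi x0 θ v) * phi θ m w)
        = fun θ => (R + θ) * (Phi x1 θ v - Phi x0 θ v) * phi θ m w
          + b * (Phi x1 θ v * phi θ m w - Phi x0 θ v * phi θ m w) by funext θ; ring,
      integral_add hA hB, MeasureTheory.integral_const_mul, integral_sub iP1 iP0]
  rw [hsub, hsplit, Phi_conv hv hw x1 m, Phi_conv hv hw x0 m]
  ring
lemma measurable_Phi_comp {δ : Type*} [MeasurableSpace δ] {v : ℝ} (hv : 0 < v)
    {X T : δ → ℝ} (hX : Measurable X) (hT : Measurable T) :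
    Measurable fun d => Phi (X d) (T d) v := by
  have h : ∀ d, Phi (X d) (T d) v = Phi (X d - T d) 0 v := fun d => Phi_shift _ _ _
  simp_rw [h]
  exact (Phi_mono hv 0).measurable.comp (hX.sub hT)

set_option maxHeartbeats 1600000 in
/-- The information-withholding welfare gain equals the biased sender's expected
concealment gain minus `b` times the aggregate-action gain. -/
theorem withholding_gain_decomposition (α β γ : ℝ) (hα : 0 < α) (hβ : 0 < β) (hγ : 0 < γ)
    (μ r b : ℝ) (p : ℝ) (hp0 : 0 < p) (hp1 : p < 1)
    (y₁ y₂ : ℝ) (hy : y₁ < y₂) (x₀ : ℝ) :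
    let xhat : ℝ → ℝ := fun y => -(α*y + γ*μ)/β
    let θb : ℝ → ℝ := fun y => (α*y + γ*μ)/(α + γ)
    let V : ℝ := 1/β + 1/(α + γ)
    let Payb : ℝ → ℝ → ℝ := fun x y =>
      ∫ θ : ℝ, (r + b + θ) * (1 - Phi x θ (1/β)) * phi θ (θb y) (1/(α + γ))
    p * (∫ θ : ℝ,
        (∫ y in y₁..y₂,
          (r + θ) * (Phi (xhat y) θ (1/β) - Phi x₀ θ (1/β)) * phi y θ (1/α))
        * phi θ μ (1/γ))
      = p * (∫ y in y₁..y₂,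
          (Payb x₀ y - Payb (xhat y) y
            - b * (Phi (xhat y) (θb y) V - Phi x₀ (θb y) V)) * phi y μ (1/α + 1/γ)) := by
  intro xhat θb V Payb
  have hθb : ∀ y, θb y = (α*y + γ*μ)/(α + γ) := fun _ => rfl
  have hV : V = 1/β + 1/(α + γ) := rfl
  have hPayb : ∀ x y, Payb x y
      = ∫ θ : ℝ, (r + b + θ) * (1 - Phi x θ (1/β)) * phi θ (θb y) (1/(α + γ)) :=
    fun _ _ => rfl
  have hva : (0:ℝ) < 1/α := by positivity
  have hvg : (0:ℝ) < 1/γ := by positivity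
  have hvb : (0:ℝ) < 1/β := by positivity
  have hw : (0:ℝ) < 1/(α+γ) := by positivity
  have hmx : Continuous xhat := by
    show Continuous fun y : ℝ => -(α*y + γ*μ)/β
    fun_prop
  have bndΔ : ∀ θ y, |Phi (xhat y) θ (1/β) - Phi x₀ θ (1/β)| ≤ 1 := fun θ y => abs_le.mpr
    ⟨by linarith [Phi_nonneg hvb.le (xhat y) θ, Phi_le_one hvb x₀ θ],
     by linarith [Phi_le_one hvb (xhat y) θ, Phi_nonneg hvb.le x₀ θ]⟩
  set Ka : ℝ := (2*π*(1/α)) ^ (-(1:ℝ)/2) with hKa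
  have hKa0 : 0 ≤ Ka := Real.rpow_nonneg (by positivity) _
  set ν : Measure ℝ := volume.restrict (Set.Ioc y₁ y₂) with hν
  haveI : IsFiniteMeasure ν := ⟨by rw [hν, Measure.restrict_apply_univ]; exact measure_Ioc_lt_top⟩
  have hbd : ∀ θ y, ‖(r + θ) * (Phi (xhat y) θ (1/β) - Phi x₀ θ (1/β)) * phi y θ (1/α)
        * phi θ μ (1/γ)‖ ≤ (|r| + |θ|) * Ka * phi θ μ (1/γ) := by
    intro θ y
    rw [Real.norm_eq_abs, abs_mul, abs_mul, abs_mul, abs_of_nonneg (phi_nonneg hva.le _ _),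
      abs_of_nonneg (phi_nonneg hvg.le _ _)]
    have h1 : |r + θ| * |Phi (xhat y) θ (1/β) - Phi x₀ θ (1/β)| ≤ (|r| + |θ|) * 1 :=
      mul_le_mul (abs_add_le _ _) (bndΔ θ y) (abs_nonneg _) (by positivity)
    have h2 : |r + θ| * |Phi (xhat y) θ (1/β) - Phi x₀ θ (1/β)| * phi y θ (1/α)
        ≤ ((|r| + |θ|) * 1) * Ka :=
      mul_le_mul h1 (phi_le hva y θ) (phi_nonneg hva.le _ _) (by positivity)
    calc |r + θ| * |Phi (xhat y) θ (1/β) - Phi x₀ θ (1/β)| * phi y θ (1/α) * phi θ μ (1/γ)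
        ≤ (((|r| + |θ|) * 1) * Ka) * phi θ μ (1/γ) :=
          mul_le_mul_of_nonneg_right h2 (phi_nonneg hvg.le _ _)
      _ = (|r| + |θ|) * Ka * phi θ μ (1/γ) := by ring
  have hm1 : Measurable fun q : ℝ × ℝ => Phi (xhat q.2) q.1 (1/β) :=
    measurable_Phi_comp hvb (hmx.comp continuous_snd).measurable measurable_fst
  have hm2 : Measurable fun q : ℝ × ℝ => Phi x₀ q.1 (1/β) :=
    measurable_Phi_comp hvb measurable_const measurable_fst
  have hm3 : Continuous fun q : ℝ × ℝ => phi q.2 q.1 (1/α) := by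
    unfold phi; fun_prop
  have hm4 : Continuous fun q : ℝ × ℝ => phi q.1 μ (1/γ) := by
    unfold phi; fun_prop
  have hmeasG : AEStronglyMeasurable
      (fun q : ℝ × ℝ => (r + q.1) * (Phi (xhat q.2) q.1 (1/β) - Phi x₀ q.1 (1/β))
        * phi q.2 q.1 (1/α) * phi q.1 μ (1/γ)) (volume.prod ν) :=
    ((((measurable_const.add measurable_fst).mul (hm1.sub hm2)).mul hm3.measurable).mul
      hm4.measurable).aestronglyMeasurable
  have hintL : Integrable
      (fun q : ℝ × ℝ => (r + q.1) * (Phi (xhat q.2) q.1 (1/β) - Phi x₀ q.1 (1/β))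
        * phi q.2 q.1 (1/α) * phi q.1 μ (1/γ)) (volume.prod ν) := by
    rw [MeasureTheory.integrable_prod_iff hmeasG]
    constructor
    · refine Filter.Eventually.of_forall fun θ => ?_
      have hmy : Measurable fun y => (r + θ)
          * (Phi (xhat y) θ (1/β) - Phi x₀ θ (1/β)) * phi y θ (1/α) * phi θ μ (1/γ) := by
        have : Measurable fun y => Phi (xhat y) θ (1/β) :=
          measurable_Phi_comp hvb hmx.measurable measurable_const
        exact (((measurable_const.mul (this.sub measurable_const)).mul
          (continuous_phi θ (1/α)).measurable).mul measurable_const)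
      exact Integrable.mono' (integrable_const ((|r| + |θ|) * Ka * phi θ μ (1/γ)))
        hmy.aestronglyMeasurable (Filter.Eventually.of_forall fun y => hbd θ y)
    · refine Integrable.mono'
        (g := fun θ => ((|r| + |θ|) * phi θ μ (1/γ)) * (Ka * (y₂ - y₁)))
        (((integrable_linear_phi hvg |r| μ).mul_const (Ka * (y₂ - y₁))))
        (hmeasG.norm.integral_prod_right') (Filter.Eventually.of_forall fun θ => ?_)
      have h := norm_integral_le_of_norm_le_const (μ := ν)
        (f := fun y => ‖(r + θ) * (Phi (xhat y) θ (1/β) - Phi x₀ θ (1/β)) * phi y θ (1/α)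
          * phi θ μ (1/γ)‖) (C := (|r| + |θ|) * Ka * phi θ μ (1/γ))
        (Filter.Eventually.of_forall fun y => by rw [norm_norm]; exact hbd θ y)
      have hνr : (ν Set.univ).toReal = y₂ - y₁ := by
        rw [hν, Measure.restrict_apply_univ, Real.volume_Ioc,
          ENNReal.toReal_ofReal (by linarith)]
      refine le_trans h ?_
      rw [Measure.real, hνr]
      exact le_of_eq (by ring)
  have hRHSint : ∀ y, Payb x₀ y - Payb (xhat y) y
      - b * (Phi (xhat y) (θb y) V - Phi x₀ (θb y) V)
      = ∫ θ, (r + θ) * (Phi (xhat y) θ (1/β) - Phi x₀ θ (1/β)) * phi θ (θb y) (1/(α+γ)) := by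
    intro y
    rw [hPayb x₀ y, hPayb (xhat y) y, hV]
    exact key_identity hvb hw x₀ (xhat y) (θb y) r b
  congr 1
  calc (∫ θ : ℝ, (∫ y in y₁..y₂,
          (r + θ) * (Phi (xhat y) θ (1/β) - Phi x₀ θ (1/β)) * phi y θ (1/α))
        * phi θ μ (1/γ))
      = ∫ θ : ℝ, ∫ y in Set.Ioc y₁ y₂,
          (r + θ) * (Phi (xhat y) θ (1/β) - Phi x₀ θ (1/β)) * phi y θ (1/α)
            * phi θ μ (1/γ) := by
        congr 1; funext θ
        rw [intervalIntegral.integral_of_le hy.le, ← MeasureTheory.integral_mul_const]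
    _ = ∫ y in Set.Ioc y₁ y₂, ∫ θ : ℝ,
          (r + θ) * (Phi (xhat y) θ (1/β) - Phi x₀ θ (1/β)) * phi y θ (1/α)
            * phi θ μ (1/γ) :=
        MeasureTheory.integral_integral_swap (by exact hintL)
    _ = ∫ y in Set.Ioc y₁ y₂, (∫ θ : ℝ,
          (r + θ) * (Phi (xhat y) θ (1/β) - Phi x₀ θ (1/β)) * phi θ (θb y) (1/(α+γ)))
            * phi y μ (1/α + 1/γ) := by
        congr 1; funext y
        rw [← MeasureTheory.integral_mul_const]
        congr 1; funext θ
        have hc : (1/γ*y + 1/α*μ)/(1/α + 1/γ) = θb y := by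
          rw [hθb]; field_simp; ring
        have hw' : (1/α)*(1/γ)/(1/α + 1/γ) = 1/(α+γ) := by field_simp; ring
        rw [mul_assoc, phi_mul_phi hva hvg y θ μ, hc, hw', ← mul_assoc]
    _ = ∫ y in y₁..y₂,
          (Payb x₀ y - Payb (xhat y) y
            - b * (Phi (xhat y) (θb y) V - Phi x₀ (θb y) V)) * phi y μ (1/α + 1/γ) := by
        rw [intervalIntegral.integral_of_le hy.le]
        congr 1; funext y
        rw [hRHSint y]
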